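/- arXiv:1209.0643 — 7 statements merged into one kernel-verified Lean document; each statement's English description precedes it below -/
import Mathlib

section
/- Strong LP duality for the abstract transformer of a sequential statement: fix a real bound vector d : Fin m → ℝ and suppose the primal is feasible, i.e. there exist x : Fin n → ℝ, x' : Fin n → ℝ, x'' : Fin q → ℝ with T.mulVec x ≤ d and A.mulVec x + A'.mulVec x' + A''.mulVec x'' ≤ b. Then, as elements of EReal, ⨆ {(((T.mulVec x') i : ℝ) : EReal) | ∃ x x'', T.mulVec x ≤ d ∧ A.mulVec x + A'.mulVec x' + A''.mulVec x'' ≤ b} = ⨅ {((∑ j, d j * y₁ j + ∑ k, b k * y₂ k : ℝ) : EReal) | y₁ : Fin m → ℝ, y₂ : Fin p → ℝ, 0 ≤ y₁, 0 ≤ y₂, Tᵀ.mulVec y₁ + Aᵀ.mulVec y₂ = 0, (A'')ᵀ.mulVec y₂ = 0, (A')ᵀ.mulVec y₂ = (fun j => T i j)} (in particular, the infimum over the empty set is +∞, matching an unbounded primal). -/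
/-!
Stacking `(x, x', x'')` and the two blocks of constraints turns the abstract transformer into the
linear program `sup {c ⬝ᵥ z | M *ᵥ z ≤ d ⊕ b}` whose LP dual is exactly the right-hand side, so the
theorem is LP strong duality. Weak duality gives `≤`. Conversely, if the primal optimum `s` is
finite, Farkas' lemma applied to the homogenized system produces a dual solution of value at most
`s`; Farkas' lemma itself is the separation of a point from the cone `{y ᵥ* M | 0 ≤ y}`, which is
closed by the conic Carathéodory theorem.
-/

open Function Matrix

section Caratheodory
variable {𝕜 E ι : Type*} [Field 𝕜] [LinearOrder 𝕜] [IsStrictOrderedRing 𝕜]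
  [AddCommGroup E] [Module 𝕜 E] [Fintype ι] (v : ι → E)

theorem exists_nonneg_support_ssubset_sum_eq {c w : ι → 𝕜} (hc : 0 ≤ c)
    (hw : ∑ i, w i • v i = 0) (hwc : support w ⊆ support c) {j : ι} (hj : 0 < w j) :
    ∃ c' : ι → 𝕜, 0 ≤ c' ∧ support c' ⊂ support c ∧ ∑ i, c' i • v i = ∑ i, c i • v i := by
  classical
  obtain ⟨i₀, hi₀, hmin⟩ := Finset.exists_min_image {i | 0 < w i} (fun i => c i / w i)
    ⟨j, by simpa using hj⟩
  rw [Finset.mem_filter_univ] at hi₀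
  set t := c i₀ / w i₀
  have ht : 0 ≤ t := div_nonneg (hc i₀) hi₀.le
  refine ⟨c - t • w, fun i => ?_, ?_, ?_⟩
  · have : t * w i ≤ c i := by
      rcases lt_or_ge 0 (w i) with hwi | hwi
      · exact (le_div_iff₀ hwi).mp (hmin i (by simpa using hwi))
      · exact (mul_nonpos_of_nonneg_of_nonpos ht hwi).trans (hc i)
    simpa using this
  · refine LE.le.ssubset_of_mem_notMem (a := i₀) (fun i hi => ?_)
      (hwc hi₀.ne') (by simp [t, hi₀.ne'])
    by_contra hci
    exact hi (by simp [notMem_support.mp hci, notMem_support.mp (mt (@hwc i) hci)])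
  · simp [sub_smul, Finset.sum_sub_distrib, mul_smul, ← Finset.smul_sum, hw]

theorem exists_nonneg_support_ssubset_sum_eq_of_not_linearIndepOn {c : ι → 𝕜} (hc : 0 ≤ c)
    (hdep : ¬ LinearIndepOn 𝕜 v (support c)) :
    ∃ c' : ι → 𝕜, 0 ≤ c' ∧ support c' ⊂ support c ∧ ∑ i, c' i • v i = ∑ i, c i • v i := by
  classical
  obtain ⟨t, w, hts, hwt, hw, j, hjt, hj⟩ : ∃ (t : Finset ι) (w : ι → 𝕜), (t : Set ι) ⊆ support c ∧
      (∀ i ∉ t, w i = 0) ∧ ∑ i ∈ t, w i • v i = 0 ∧ ∃ j ∈ t, w j ≠ 0 := by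
    simpa [linearIndepOn_iff''] using hdep
  have hw' : ∑ i, w i • v i = 0 := by
    rwa [← Finset.sum_subset t.subset_univ fun i _ hi => by simp [hwt i hi]]
  have hwc : support w ⊆ support c := fun i hi => hts (by_contra fun h => hi (hwt i h))
  wlog hpos : 0 < w j generalizing w
  · exact this (-w) (fun i hi => by simp [hwt i hi]) (by simpa [neg_smul] using hw)
      (by simpa using hj) (by simpa [Finset.sum_neg_distrib] using hw') (by simpa using hwc)
      (by simpa using lt_of_le_of_ne (not_lt.mp hpos) hj)
  exact exists_nonneg_support_ssubset_sum_eq v hc hw' hwc hpos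

theorem exists_nonneg_linearIndepOn_support_sum_eq {c : ι → 𝕜} (hc : 0 ≤ c) :
    ∃ c' : ι → 𝕜, 0 ≤ c' ∧ LinearIndepOn 𝕜 v (support c') ∧
      ∑ i, c' i • v i = ∑ i, c i • v i := by
  induction hs : support c using WellFoundedLT.induction generalizing c with
  | ind s ih =>
    subst hs
    by_cases hli : LinearIndepOn 𝕜 v (support c)
    · exact ⟨c, hc, hli, rfl⟩
    obtain ⟨c', hc', hlt, hsum⟩ :=
      exists_nonneg_support_ssubset_sum_eq_of_not_linearIndepOn v hc hli
    obtain ⟨c'', hc'', hli'', hsum''⟩ := ih _ hlt hc' rfl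
    exact ⟨c'', hc'', hli'', hsum''.trans hsum⟩

end Caratheodory

theorem isClosed_image_linearCombination_nonneg {E ι : Type*} [AddCommGroup E] [Module ℝ E]
    [TopologicalSpace E] [IsTopologicalAddGroup E] [ContinuousSMul ℝ E] [T2Space E] [Fintype ι]
    (v : ι → E) :
    IsClosed (Fintype.linearCombination ℝ v '' Set.Ici 0) := by
  classical
  have hunion : Fintype.linearCombination ℝ v '' Set.Ici 0 =
      ⋃ (s : Set ι) (_ : LinearIndepOn ℝ v s),
        Fintype.linearCombination ℝ (fun i : s => v i) '' Set.Ici 0 := by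
    ext x
    simp only [Set.mem_image, Set.mem_iUnion, Set.mem_Ici, Fintype.linearCombination_apply]
    constructor
    · rintro ⟨c, hc, rfl⟩
      obtain ⟨c', hc', hli, hsum⟩ := exists_nonneg_linearIndepOn_support_sum_eq v hc
      refine ⟨support c', hli, fun i => c' i, fun i => hc' i, ?_⟩
      rw [← hsum, Finset.sum_set_coe (f := fun i => c' i • v i)]
      exact Finset.sum_subset (Finset.subset_univ _) fun i _ hi => by simp_all
    · rintro ⟨s, -, c, hc, rfl⟩
      refine ⟨fun i => if h : i ∈ s then c ⟨i, h⟩ else 0, fun i => ?_, ?_⟩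
      · dsimp only; split_ifs; exacts [hc _, le_rfl]
      · rw [← Finset.sum_subset (Finset.subset_univ s.toFinset) fun i _ hi => by simp_all,
          ← Finset.sum_set_coe]
        simp
  rw [hunion]
  refine isClosed_iUnion_of_finite fun s => isClosed_iUnion_of_finite fun hli => ?_
  have hinj := linearIndependent_iff_injective_fintypeLinearCombination.mp hli
  exact (LinearMap.isClosedEmbedding_of_injective (LinearMap.ker_eq_bot.mpr hinj)).isClosedMap _
    isClosed_Ici

namespace Matrix
variable {ρ σ : Type*} [Fintype σ]

theorem exists_lt_dotProduct_of_mulVec_nonpos (M : Matrix ρ σ ℝ) {b : ρ → ℝ} {c x₀ u : σ → ℝ}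
    (hx₀ : M *ᵥ x₀ ≤ b) (hu : M *ᵥ u ≤ 0) (hcu : 0 < c ⬝ᵥ u) (r : ℝ) :
    ∃ x, M *ᵥ x ≤ b ∧ r < c ⬝ᵥ x := by
  set t := max 0 ((r + 1 - c ⬝ᵥ x₀) / (c ⬝ᵥ u))
  have ht : 0 ≤ t := le_max_left _ _
  refine ⟨x₀ + t • u, ?_, ?_⟩
  · rw [mulVec_add, mulVec_smul]
    simpa using add_le_add hx₀ (smul_nonpos_of_nonneg_of_nonpos ht hu)
  · have : r + 1 - c ⬝ᵥ x₀ ≤ t * (c ⬝ᵥ u) := (div_le_iff₀ hcu).mp (le_max_right _ _)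
    rw [dotProduct_add, dotProduct_smul, smul_eq_mul]
    linarith

/-- Here `(x, τ)` separates `(c, δ)` from the cone spanned by the rows of `[M b; 0 1]`. -/
theorem exists_lt_dotProduct_of_mulVec_add_smul_nonneg (M : Matrix ρ σ ℝ) {b : ρ → ℝ}
    {c x₀ x : σ → ℝ} {δ τ : ℝ} (hx₀ : M *ᵥ x₀ ≤ b) (hτ : 0 ≤ τ) (hx : 0 ≤ M *ᵥ x + τ • b)
    (hcx : c ⬝ᵥ x + δ * τ < 0) : ∃ x', M *ᵥ x' ≤ b ∧ δ < c ⬝ᵥ x' := by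
  rcases hτ.eq_or_lt with rfl | hτ
  · exact M.exists_lt_dotProduct_of_mulVec_nonpos hx₀ (u := -x)
      (by simpa [mulVec_neg] using hx) (by simp only [dotProduct_neg]; linarith) δ
  refine ⟨-τ⁻¹ • x, ?_, ?_⟩
  · have hMx : M *ᵥ (-τ⁻¹ • x) = b - τ⁻¹ • (M *ᵥ x + τ • b) := by
      rw [smul_add, smul_smul, inv_mul_cancel₀ hτ.ne', one_smul, mulVec_smul, neg_smul]
      abel
    exact hMx ▸ sub_le_self b (smul_nonneg (inv_nonneg.mpr hτ.le) hx)
  · have hcx' : c ⬝ᵥ (-τ⁻¹ • x) = δ - τ⁻¹ * (c ⬝ᵥ x + δ * τ) := by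
      rw [dotProduct_smul, smul_eq_mul]
      field_simp
      ring
    rw [hcx']
    linarith [mul_neg_of_pos_of_neg (inv_pos.mpr hτ) hcx]

variable [Fintype ρ]

theorem exists_mulVec_nonneg_dotProduct_neg (M : Matrix ρ σ ℝ) {c : σ → ℝ}
    (h : ∀ y, 0 ≤ y → y ᵥ* M ≠ c) : ∃ u, 0 ≤ M *ᵥ u ∧ c ⬝ᵥ u < 0 := by
  classical
  let K : ProperCone ℝ (σ → ℝ) :=
    ⟨(PointedCone.positive ℝ (ρ → ℝ)).map (Fintype.linearCombination ℝ M.row),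
      isClosed_image_linearCombination_nonneg M.row⟩
  have hmem : ∀ {x}, x ∈ K ↔ ∃ y, 0 ≤ y ∧ y ᵥ* M = x := by
    intro x
    change x ∈ Fintype.linearCombination ℝ M.row '' Set.Ici 0 ↔ _
    simp only [Set.mem_image, Set.mem_Ici, vecMul_eq_sum]
    rfl
  obtain ⟨f, hfK, hfc⟩ := K.hyperplane_separation_point (x₀ := c) fun hc =>
    let ⟨y, hy, hyc⟩ := hmem.mp hc; h y hy hyc
  set u : σ → ℝ := fun j => f (Pi.single j 1)
  have hf : ∀ x, f x = x ⬝ᵥ u := fun x => by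
    conv_lhs => rw [pi_eq_sum_univ' x]
    simp [dotProduct, u]
  refine ⟨u, fun i => ?_, by rwa [← hf]⟩
  have hrow : M i ∈ K := hmem.mpr ⟨Pi.single i 1, by simp [Pi.single_nonneg], single_one_vecMul i M⟩
  have := hfK _ hrow
  rwa [hf] at this

theorem exists_dual_le_of_forall_dotProduct_le (M : Matrix ρ σ ℝ) {b : ρ → ℝ} {c : σ → ℝ}
    {δ : ℝ} (hfeas : ∃ x, M *ᵥ x ≤ b) (hbound : ∀ x, M *ᵥ x ≤ b → c ⬝ᵥ x ≤ δ) :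
    ∃ y, 0 ≤ y ∧ y ᵥ* M = c ∧ b ⬝ᵥ y ≤ δ := by
  by_contra! hno
  let N : Matrix (ρ ⊕ Unit) (σ ⊕ Unit) ℝ := fromBlocks M (replicateCol Unit b) 0 1
  have hN_mulVec (x : σ → ℝ) (τ : ℝ) :
      N *ᵥ Sum.elim x (fun _ => τ) = Sum.elim (M *ᵥ x + τ • b) (fun _ => τ) := by
    ext (_ | _) <;> simp [N, mulVec, dotProduct, mul_comm]
  have hN_vecMul (y : ρ → ℝ) (t : ℝ) :
      Sum.elim y (fun _ => t) ᵥ* N = Sum.elim (y ᵥ* M) (fun _ => b ⬝ᵥ y + t) := by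
    ext (_ | _) <;> simp [N, vecMul, dotProduct, mul_comm]
  obtain ⟨u, hu, hcu⟩ := N.exists_mulVec_nonneg_dotProduct_neg (c := Sum.elim c fun _ => δ) <| by
    intro w hw hwc
    obtain ⟨y, t, rfl⟩ : ∃ y t, w = Sum.elim y fun _ => t :=
      ⟨w ∘ Sum.inl, w (Sum.inr ()), by ext (_ | _) <;> rfl⟩
    rw [hN_vecMul, Sum.elim_eq_iff] at hwc
    rw [Sum.nonneg_elim_iff] at hw
    have ht : 0 ≤ t := hw.2 ()
    have hδ : b ⬝ᵥ y + t = δ := congrFun hwc.2 ()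
    linarith [hno y hw.1 hwc.1]
  obtain ⟨x, τ, rfl⟩ : ∃ x τ, u = Sum.elim x fun _ => τ :=
    ⟨u ∘ Sum.inl, u (Sum.inr ()), by ext (_ | _) <;> rfl⟩
  rw [hN_mulVec, Sum.nonneg_elim_iff] at hu
  have hcx : c ⬝ᵥ x + δ * τ < 0 := by simpa [sumElim_dotProduct_sumElim, dotProduct] using hcu
  obtain ⟨x₀, hx₀⟩ := hfeas
  obtain ⟨x₁, hx₁, hδx₁⟩ :=
    M.exists_lt_dotProduct_of_mulVec_add_smul_nonneg hx₀ (hu.2 ()) hu.1 hcx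
  exact (hbound x₁ hx₁).not_gt hδx₁

theorem sSup_image_dotProduct_eq_sInf_image_dotProduct (M : Matrix ρ σ ℝ) (b : ρ → ℝ)
    (c : σ → ℝ) (hfeas : ∃ x, M *ᵥ x ≤ b) :
    sSup ((fun x => ((c ⬝ᵥ x : ℝ) : EReal)) '' {x | M *ᵥ x ≤ b}) =
      sInf ((fun y => ((b ⬝ᵥ y : ℝ) : EReal)) '' {y | 0 ≤ y ∧ y ᵥ* M = c}) := by
  set P := (fun x => ((c ⬝ᵥ x : ℝ) : EReal)) '' {x | M *ᵥ x ≤ b}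
  set D := (fun y => ((b ⬝ᵥ y : ℝ) : EReal)) '' {y | 0 ≤ y ∧ y ᵥ* M = c}
  have hweak : sSup P ≤ sInf D := by
    refine sSup_le ?_
    rintro _ ⟨x, hx, rfl⟩
    refine le_sInf ?_
    rintro _ ⟨y, ⟨hy, rfl⟩, rfl⟩
    rw [EReal.coe_le_coe_iff, ← dotProduct_mulVec, dotProduct_comm b]
    exact dotProduct_le_dotProduct_of_nonneg_left hx hy
  refine hweak.antisymm ?_
  obtain htop | hlt := eq_top_or_lt_top (sSup P)
  · exact htop ▸ le_top
  obtain ⟨x₀, hx₀⟩ := hfeas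
  have hbot : sSup P ≠ ⊥ := ne_bot_of_le_ne_bot (EReal.coe_ne_bot _) (le_sSup ⟨x₀, hx₀, rfl⟩)
  obtain ⟨s, hs⟩ : ∃ s : ℝ, sSup P = s := ⟨_, (EReal.coe_toReal hlt.ne hbot).symm⟩
  have hbound : ∀ x, M *ᵥ x ≤ b → c ⬝ᵥ x ≤ s := fun x hx =>
    EReal.coe_le_coe_iff.mp (hs ▸ le_sSup ⟨x, hx, rfl⟩)
  obtain ⟨y, hy, hyc, hys⟩ := M.exists_dual_le_of_forall_dotProduct_le ⟨x₀, hx₀⟩ hbound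
  calc sInf D ≤ ((b ⬝ᵥ y : ℝ) : EReal) := sInf_le ⟨y, ⟨hy, hyc⟩, rfl⟩
    _ ≤ s := EReal.coe_le_coe_iff.mpr hys
    _ = sSup P := hs.symm

end Matrix

section Sequential
variable {μ ν π κ : Type*} (T : Matrix μ ν ℝ) (A A' : Matrix π ν ℝ) (A'' : Matrix π κ ℝ)

def sequentialMatrix : Matrix (μ ⊕ π) (ν ⊕ (ν ⊕ κ)) ℝ := fromBlocks T 0 A (fromCols A' A'')

theorem sequentialMatrix_mulVec [Fintype ν] [Fintype κ] (x x' : ν → ℝ) (x'' : κ → ℝ) :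
    sequentialMatrix T A A' A'' *ᵥ Sum.elim x (Sum.elim x' x'') =
      Sum.elim (T *ᵥ x) (A *ᵥ x + A' *ᵥ x' + A'' *ᵥ x'') := by
  simp [sequentialMatrix, fromBlocks_mulVec, fromCols_mulVec, add_assoc]

theorem vecMul_sequentialMatrix [Fintype μ] [Fintype π] (y₁ : μ → ℝ) (y₂ : π → ℝ) :
    Sum.elim y₁ y₂ ᵥ* sequentialMatrix T A A' A'' =
      Sum.elim (y₁ ᵥ* T + y₂ ᵥ* A) (Sum.elim (y₂ ᵥ* A') (y₂ ᵥ* A'')) := by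
  simp [sequentialMatrix, vecMul_fromBlocks, vecMul_fromCols]

theorem sequential_primal_values_eq_image [Fintype ν] [Fintype κ] (d : μ → ℝ) (b : π → ℝ) (i : μ) :
    {v : EReal | ∃ x' : ν → ℝ, ∃ x : ν → ℝ, ∃ x'' : κ → ℝ,
        T *ᵥ x ≤ d ∧ A *ᵥ x + A' *ᵥ x' + A'' *ᵥ x'' ≤ b ∧ v = (((T *ᵥ x') i : ℝ) : EReal)} =
      (fun z => ((Sum.elim 0 (Sum.elim (T i) 0) ⬝ᵥ z : ℝ) : EReal)) ''
        {z | sequentialMatrix T A A' A'' *ᵥ z ≤ Sum.elim d b} := by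
  ext v
  constructor
  · rintro ⟨x', x, x'', hx, hx', rfl⟩
    refine ⟨Sum.elim x (Sum.elim x' x''), ?_, ?_⟩
    · simpa [sequentialMatrix_mulVec] using ⟨hx, hx'⟩
    · simp [sumElim_dotProduct_sumElim, mulVec]
  · rintro ⟨z, hz, rfl⟩
    obtain ⟨x, x', x'', rfl⟩ : ∃ x x' x'', z = Sum.elim x (Sum.elim x' x'') :=
      ⟨z ∘ Sum.inl, z ∘ Sum.inr ∘ Sum.inl, z ∘ Sum.inr ∘ Sum.inr, by ext (_ | _ | _) <;> rfl⟩
    rw [Set.mem_ofPred_eq, sequentialMatrix_mulVec, Sum.elim_le_elim_iff] at hz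
    exact ⟨x', x, x'', hz.1, hz.2, by simp [sumElim_dotProduct_sumElim, mulVec]⟩

theorem sequential_dual_values_eq_image [Fintype μ] [Fintype π] (d : μ → ℝ) (b : π → ℝ) (i : μ) :
    {w : EReal | ∃ y₁ : μ → ℝ, ∃ y₂ : π → ℝ, 0 ≤ y₁ ∧ 0 ≤ y₂ ∧
        Tᵀ *ᵥ y₁ + Aᵀ *ᵥ y₂ = 0 ∧ A''ᵀ *ᵥ y₂ = 0 ∧ A'ᵀ *ᵥ y₂ = (fun j => T i j) ∧
        w = ((∑ j, d j * y₁ j + ∑ k, b k * y₂ k : ℝ) : EReal)} =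
      (fun y => ((Sum.elim d b ⬝ᵥ y : ℝ) : EReal)) ''
        {y : μ ⊕ π → ℝ | 0 ≤ y ∧ y ᵥ* sequentialMatrix T A A' A'' =
          Sum.elim (0 : ν → ℝ) (Sum.elim (T i) (0 : κ → ℝ))} := by
  ext w
  constructor
  · rintro ⟨y₁, y₂, hy₁, hy₂, hx, hx'', hx', rfl⟩
    refine ⟨Sum.elim y₁ y₂, ⟨Sum.nonneg_elim_iff.mpr ⟨hy₁, hy₂⟩, ?_⟩,
      by simp only [sumElim_dotProduct_sumElim]; rfl⟩
    simp only [mulVec_transpose] at hx hx'' hx'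
    rw [vecMul_sequentialMatrix, hx, hx'', hx']
  · rintro ⟨y, ⟨hy, hyc⟩, rfl⟩
    rw [← Sum.elim_comp_inl_inr y] at hy hyc ⊢
    rw [vecMul_sequentialMatrix, Sum.elim_eq_iff, Sum.elim_eq_iff] at hyc
    rw [Sum.nonneg_elim_iff] at hy
    simp only [mulVec_transpose]
    exact ⟨_, _, hy.1, hy.2, hyc.1, hyc.2.2, hyc.2.1,
      by rw [sumElim_dotProduct_sumElim]; rfl⟩

end Sequential

theorem absSem_sequential_strong_duality {m n p q : ℕ} (T : Matrix (Fin m) (Fin n) ℝ)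
    (A A' : Matrix (Fin p) (Fin n) ℝ) (A'' : Matrix (Fin p) (Fin q) ℝ)
    (b : Fin p → ℝ) (i : Fin m) (d : Fin m → ℝ)
    (hfeas : ∃ x x' : Fin n → ℝ, ∃ x'' : Fin q → ℝ,
      T.mulVec x ≤ d ∧ A.mulVec x + A'.mulVec x' + A''.mulVec x'' ≤ b) :
    sSup {v : EReal | ∃ x' : Fin n → ℝ, ∃ x : Fin n → ℝ, ∃ x'' : Fin q → ℝ,
        T.mulVec x ≤ d ∧ A.mulVec x + A'.mulVec x' + A''.mulVec x'' ≤ b ∧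
        v = (((T.mulVec x') i : ℝ) : EReal)}
      =
    sInf {w : EReal | ∃ y₁ : Fin m → ℝ, ∃ y₂ : Fin p → ℝ,
        0 ≤ y₁ ∧ 0 ≤ y₂ ∧
        Tᵀ.mulVec y₁ + Aᵀ.mulVec y₂ = 0 ∧
        (A'')ᵀ.mulVec y₂ = 0 ∧
        (A')ᵀ.mulVec y₂ = (fun j => T i j) ∧
        w = ((∑ j, d j * y₁ j + ∑ k, b k * y₂ k : ℝ) : EReal)} := by
  rw [sequential_primal_values_eq_image, sequential_dual_values_eq_image]
  obtain ⟨x, x', x'', hx, hx'⟩ := hfeas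
  refine sSup_image_dotProduct_eq_sInf_image_dotProduct _ _ _ ⟨Sum.elim x (Sum.elim x' x''), ?_⟩
  rw [sequentialMatrix_mulVec, Sum.elim_le_elim_iff]
  exact ⟨hx, hx'⟩
end

section
/- The abstract transformer of a sequential statement is concave in the sense that its hypograph over real bound vectors is convex: the set {(d, r) : (Fin m → ℝ) × ℝ | (r : EReal) ≤ ⨆ {(((T.mulVec x') i : ℝ) : EReal) | ∃ x x'', T.mulVec x ≤ d ∧ A.mulVec x + A'.mulVec x' + A''.mulVec x'' ≤ b}} is a convex subset of (Fin m → ℝ) × ℝ. -/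
open Matrix

theorem absSem_sequential_hypograph_convex {m n p q : ℕ} (T : Matrix (Fin m) (Fin n) ℝ)
    (A A' : Matrix (Fin p) (Fin n) ℝ) (A'' : Matrix (Fin p) (Fin q) ℝ)
    (b : Fin p → ℝ) (i : Fin m) :
    Convex ℝ {dr : (Fin m → ℝ) × ℝ |
      (dr.2 : EReal) ≤ sSup {v : EReal | ∃ x' : Fin n → ℝ, ∃ x : Fin n → ℝ, ∃ x'' : Fin q → ℝ,
        T.mulVec x ≤ dr.1 ∧ A.mulVec x + A'.mulVec x' + A''.mulVec x'' ≤ b ∧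
        v = (((T.mulVec x') i : ℝ) : EReal)}} := by
  rintro ⟨d1, r1⟩ h1 ⟨d2, r2⟩ h2 a c ha hc hac
  simp only [Set.mem_setOf_eq] at h1 h2 ⊢
  set r : ℝ := a * r1 + c * r2 with hr
  show ((a • (d1, r1) + c • (d2, r2)).2 : EReal) ≤ _
  have h2eq : (a • (d1, r1) + c • (d2, r2)).2 = r := rfl
  rw [h2eq]
  apply le_of_forall_lt
  intro e he
  rw [lt_sSup_iff]
  -- find ε > 0 with e < r - ε
  obtain ⟨ε, hε, helt⟩ : ∃ ε : ℝ, 0 < ε ∧ e < ((r - ε : ℝ) : EReal) := by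
    induction e using EReal.rec with
    | bot => exact ⟨1, one_pos, EReal.bot_lt_coe _⟩
    | coe x =>
        have hx : x < r := by exact_mod_cast he
        refine ⟨(r - x) / 2, by linarith, ?_⟩
        rw [EReal.coe_lt_coe_iff]; linarith
    | top => exact absurd he (by simp)
  -- witnesses from h1
  have hw1 : ∃ v ∈ {v : EReal | ∃ x' : Fin n → ℝ, ∃ x : Fin n → ℝ, ∃ x'' : Fin q → ℝ,
        T.mulVec x ≤ d1 ∧ A.mulVec x + A'.mulVec x' + A''.mulVec x'' ≤ b ∧
        v = (((T.mulVec x') i : ℝ) : EReal)}, ((r1 - ε : ℝ) : EReal) < v := by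
    rw [← lt_sSup_iff]
    exact lt_of_lt_of_le (by rw [EReal.coe_lt_coe_iff]; linarith) h1
  have hw2 : ∃ v ∈ {v : EReal | ∃ x' : Fin n → ℝ, ∃ x : Fin n → ℝ, ∃ x'' : Fin q → ℝ,
        T.mulVec x ≤ d2 ∧ A.mulVec x + A'.mulVec x' + A''.mulVec x'' ≤ b ∧
        v = (((T.mulVec x') i : ℝ) : EReal)}, ((r2 - ε : ℝ) : EReal) < v := by
    rw [← lt_sSup_iff]
    exact lt_of_lt_of_le (by rw [EReal.coe_lt_coe_iff]; linarith) h2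
  obtain ⟨v1, ⟨y1, x1, z1, hx1, hc1, rfl⟩, hv1⟩ := hw1
  obtain ⟨v2, ⟨y2, x2, z2, hx2, hc2, rfl⟩, hv2⟩ := hw2
  have hw1' : r1 - ε < T.mulVec y1 i := by exact_mod_cast hv1
  have hw2' : r2 - ε < T.mulVec y2 i := by exact_mod_cast hv2
  refine ⟨_, ⟨a • y1 + c • y2, a • x1 + c • x2, a • z1 + c • z2, ?_, ?_, rfl⟩, ?_⟩
  · intro j
    have e1 : T.mulVec (a • x1 + c • x2) j = a * T.mulVec x1 j + c * T.mulVec x2 j := by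
      rw [mulVec_add, mulVec_smul, mulVec_smul]; rfl
    have g1 := hx1 j
    have g2 := hx2 j
    have : (a • (d1, r1) + c • (d2, r2)).1 j = a * d1 j + c * d2 j := rfl
    rw [e1, this]
    have := mul_le_mul_of_nonneg_left g1 ha
    have := mul_le_mul_of_nonneg_left g2 hc
    linarith
  · intro j
    have e1 : (A.mulVec (a • x1 + c • x2) + A'.mulVec (a • y1 + c • y2)
        + A''.mulVec (a • z1 + c • z2)) j
        = a * (A.mulVec x1 + A'.mulVec y1 + A''.mulVec z1) j
          + c * (A.mulVec x2 + A'.mulVec y2 + A''.mulVec z2) j := by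
      simp only [mulVec_add, mulVec_smul, Pi.add_apply, Pi.smul_apply, smul_eq_mul]
      ring
    rw [e1]
    have g1 := hc1 j
    have g2 := hc2 j
    have := mul_le_mul_of_nonneg_left g1 ha
    have := mul_le_mul_of_nonneg_left g2 hc
    have hbj : a * b j + c * b j = b j := by rw [← add_mul, hac, one_mul]
    linarith
  · have e1 : T.mulVec (a • y1 + c • y2) i = a * T.mulVec y1 i + c * T.mulVec y2 i := by
      rw [mulVec_add, mulVec_smul, mulVec_smul]; rfl
    rw [e1]
    refine lt_of_lt_of_le helt ?_
    rw [EReal.coe_le_coe_iff]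
    have := mul_le_mul_of_nonneg_left hw1'.le ha
    have := mul_le_mul_of_nonneg_left hw2'.le hc
    have hre : a * (r1 - ε) + c * (r2 - ε) = r - ε := by rw [hr]; nlinarith [hac]
    linarith
end

section
/- Replacing strict inequalities by non-strict ones does not change the optimal value of a feasible linear optimization problem: let P = {x : Fin q → ℝ | A.mulVec x ≤ b ∧ ∀ k, (C.mulVec x) k < e k} and Q = {x : Fin q → ℝ | A.mulVec x ≤ b ∧ C.mulVec x ≤ e}. If P is nonempty, then ⨆ x ∈ P, ((c ⬝ᵥ x : ℝ) : EReal) = ⨆ x ∈ Q, ((c ⬝ᵥ x : ℝ) : EReal). -/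
open Matrix

theorem strict_relaxation_same_sup {p q r : ℕ}
    (A : Matrix (Fin p) (Fin q) ℝ) (C : Matrix (Fin r) (Fin q) ℝ)
    (b : Fin p → ℝ) (e : Fin r → ℝ) (c : Fin q → ℝ)
    (hP : Set.Nonempty {x : Fin q → ℝ | A.mulVec x ≤ b ∧ ∀ k, (C.mulVec x) k < e k}) :
    (⨆ x ∈ {x : Fin q → ℝ | A.mulVec x ≤ b ∧ ∀ k, (C.mulVec x) k < e k},
        ((c ⬝ᵥ x : ℝ) : EReal))
      =
    ⨆ x ∈ {x : Fin q → ℝ | A.mulVec x ≤ b ∧ C.mulVec x ≤ e},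
        ((c ⬝ᵥ x : ℝ) : EReal) := by
  apply le_antisymm
  · refine iSup₂_le fun x hx => ?_
    exact le_iSup₂_of_le x ⟨hx.1, fun k => (hx.2 k).le⟩ le_rfl
  · refine iSup₂_le fun y hy => ?_
    obtain ⟨x₀, hx₀A, hx₀C⟩ := hP
    have key : ∀ t ∈ Set.Ico (0:ℝ) 1,
        ((c ⬝ᵥ (t • y + (1-t) • x₀) : ℝ) : EReal) ≤
          ⨆ x ∈ {x : Fin q → ℝ | A.mulVec x ≤ b ∧ ∀ k, (C.mulVec x) k < e k},
            ((c ⬝ᵥ x : ℝ) : EReal) := by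
      intro t ht
      apply le_biSup (f := fun x => ((c ⬝ᵥ x : ℝ) : EReal))
      constructor
      · intro i
        have h : A.mulVec (t • y + (1-t) • x₀) i
            = t * A.mulVec y i + (1-t) * A.mulVec x₀ i := by
          simp [Matrix.mulVec_add, Matrix.mulVec_smul]
        rw [h]
        calc t * A.mulVec y i + (1-t) * A.mulVec x₀ i
            ≤ t * b i + (1-t) * b i := by
              gcongr
              exacts [ht.1, hy.1 i, by linarith [ht.2], hx₀A i]
          _ = b i := by ring
      · intro k
        have h : C.mulVec (t • y + (1-t) • x₀) k
            = t * C.mulVec y k + (1-t) * C.mulVec x₀ k := by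
          simp [Matrix.mulVec_add, Matrix.mulVec_smul]
        rw [h]
        have h1 : t * C.mulVec y k ≤ t * e k :=
          mul_le_mul_of_nonneg_left (hy.2 k) ht.1
        have h2 : (1-t) * C.mulVec x₀ k < (1-t) * e k :=
          mul_lt_mul_of_pos_left (hx₀C k) (by linarith [ht.2])
        nlinarith
    have tend : Filter.Tendsto (fun t : ℝ => ((c ⬝ᵥ (t • y + (1-t) • x₀) : ℝ) : EReal))
        (nhdsWithin 1 (Set.Iio 1)) (nhds ((c ⬝ᵥ y : ℝ) : EReal)) := by
      have hc : Continuous (fun t : ℝ => (c ⬝ᵥ (t • y + (1-t) • x₀) : ℝ)) := by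
        simp only [dotProduct_add, dotProduct_smul, smul_eq_mul]
        fun_prop
      have h2 : Filter.Tendsto (fun t : ℝ => (c ⬝ᵥ (t • y + (1-t) • x₀) : ℝ))
          (nhdsWithin 1 (Set.Iio 1)) (nhds (c ⬝ᵥ y)) := by
        have h3 := hc.tendsto 1
        simp only [one_smul, sub_self, zero_smul, add_zero] at h3
        exact h3.mono_left nhdsWithin_le_nhds
      exact (continuous_coe_real_ereal.tendsto _).comp h2
    refine le_of_tendsto tend ?_
    filter_upwards [Ioo_mem_nhdsLT_of_mem (by norm_num : (1:ℝ) ∈ Set.Ioc 0 1)] with t ht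
    exact key t ⟨ht.1.le, ht.2⟩
end

section
/- A finite system of strict and non-strict linear inequalities with rational coefficients has a real solution if and only if it has a rational solution: there exists x : Fin q → ℝ with (∀ i, ∑ j, (A i j : ℝ) * x j ≤ (b i : ℝ)) and (∀ k, ∑ j, (C k j : ℝ) * x j < (e k : ℝ)) if and only if there exists x : Fin q → ℚ with (∀ i, ∑ j, A i j * x j ≤ b i) and (∀ k, ∑ j, C k j * x j < e k). -/
/-!
Fourier–Motzkin elimination. A system of linear inequalities in `t, x₁, …, x_q` has a solution
with prescribed `x` iff every lower bound on `t` that it imposes lies below every upper bound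
(Helly's theorem on the line). These comparisons are again linear inequalities with rational
coefficients, in one variable less. Eliminating all variables leaves a system of inequalities
between rational constants, whose truth does not depend on the ordered field in which the
original system was to be solved.
-/

open Finset Module

theorem Convex.helly_theorem_of_finrank_eq_one {ι 𝕜 E : Type*} [Field 𝕜] [LinearOrder 𝕜]
    [IsStrictOrderedRing 𝕜] [AddCommGroup E] [Module 𝕜 E] [FiniteDimensional 𝕜 E]
    (hE : finrank 𝕜 E = 1) {F : ι → Set E} {s : Finset ι}
    (h_convex : ∀ i ∈ s, Convex 𝕜 (F i)) (h_inter : ∀ i ∈ s, ∀ j ∈ s, (F i ∩ F j).Nonempty) :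
    (⋂ i ∈ s, F i).Nonempty := by
  classical
  refine helly_theorem' h_convex fun I hIs hcard => ?_
  rw [hE] at hcard
  rcases Nat.lt_or_eq_of_le hcard with hlt | htwo
  · obtain rfl | ⟨i, hi⟩ := I.eq_empty_or_nonempty
    · simp
    obtain rfl : I = {i} :=
      eq_singleton_iff_unique_mem.mpr ⟨hi, fun j hj => card_le_one.mp (by omega) j hj i hi⟩
    simpa using (h_inter i (hIs hi) i (hIs hi)).mono Set.inter_subset_left
  · obtain ⟨i, j, -, rfl⟩ := card_eq_two.mp htwo
    simpa using h_inter i (hIs (by simp)) j (hIs (by simp))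

def LtOrLe {α : Type*} [Preorder α] : Bool → α → α → Prop
  | true, a, b => a < b
  | false, a, b => a ≤ b

section LtOrLe

variable {s s' : Bool}

theorem ltOrLe_of_lt {α : Type*} [Preorder α] {a b : α} (h : a < b) : LtOrLe s a b := by
  cases s
  exacts [h.le, h]

theorem LtOrLe.trans {α : Type*} [Preorder α] {a b c : α} (h : LtOrLe s a b)
    (h' : LtOrLe s' b c) : LtOrLe (s || s') a c := by
  cases s <;> cases s'
  exacts [le_trans h h', lt_of_le_of_lt h h', lt_of_lt_of_le h h', lt_trans h h']

theorem LtOrLe.exists_between {α : Type*} [LinearOrder α] [DenselyOrdered α] {a b : α}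
    (h : LtOrLe (s || s') a b) : ∃ t, LtOrLe s a t ∧ LtOrLe s' t b := by
  cases s <;> cases s'
  · exact ⟨a, le_rfl, h⟩
  all_goals
    obtain ⟨t, hat, htb⟩ := _root_.exists_between (show a < b from h)
    exact ⟨t, ltOrLe_of_lt hat, ltOrLe_of_lt htb⟩

variable {K : Type*} [Field K] [LinearOrder K] [IsStrictOrderedRing K] {a b c : K}

theorem ltOrLe_ratCast_iff {a b : ℚ} : LtOrLe s (a : K) (b : K) ↔ LtOrLe s a b := by
  cases s <;> simp only [LtOrLe, Rat.cast_le, Rat.cast_lt]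

theorem ltOrLe_sub_add_iff : LtOrLe s (a - b + c) a ↔ LtOrLe s c b := by
  cases s <;> simp only [LtOrLe] <;> constructor <;> intro <;> linarith

theorem ltOrLe_mul_add_iff_of_pos {t r : K} (ha : 0 < a) :
    LtOrLe s (a * t + r) b ↔ LtOrLe s t ((b - r) / a) := by
  cases s <;> simp only [LtOrLe]
  · rw [le_div_iff₀ ha]; constructor <;> intro <;> linarith
  · rw [lt_div_iff₀ ha]; constructor <;> intro <;> linarith

theorem ltOrLe_mul_add_iff_of_neg {t r : K} (ha : a < 0) :
    LtOrLe s (a * t + r) b ↔ LtOrLe s ((b - r) / a) t := by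
  cases s <;> simp only [LtOrLe]
  · rw [div_le_iff_of_neg ha]; constructor <;> intro <;> linarith
  · rw [div_lt_iff_of_neg ha]; constructor <;> intro <;> linarith

theorem exists_ltOrLe_between {ι : Type*} {lo hi : Finset ι} {f : ι → K} {strict : ι → Bool}
    (h : ∀ i ∈ lo, ∀ j ∈ hi, LtOrLe (strict i || strict j) (f i) (f j)) :
    ∃ t, (∀ i ∈ lo, LtOrLe (strict i) (f i) t) ∧ ∀ j ∈ hi, LtOrLe (strict j) t (f j) := by
  let F : ι ⊕ ι → Set K :=
    Sum.elim (fun i => {t | LtOrLe (strict i) (f i) t})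
      (fun j => {t | LtOrLe (strict j) t (f j)})
  have h_convex : ∀ i ∈ lo.disjSum hi, Convex K (F i) := by
    rintro (i | j) -
    · show Convex K {t | LtOrLe (strict i) (f i) t}
      cases strict i
      exacts [convex_Ici (f i), convex_Ioi (f i)]
    · show Convex K {t | LtOrLe (strict j) t (f j)}
      cases strict j
      exacts [convex_Iic (f j), convex_Iio (f j)]
  have h_inter : ∀ i ∈ lo.disjSum hi, ∀ j ∈ lo.disjSum hi, (F i ∩ F j).Nonempty := by
    rintro (i | i) hi' (j | j) hj'
    · exact ⟨max (f i) (f j) + 1, ltOrLe_of_lt (by linarith [le_max_left (f i) (f j)]),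
        ltOrLe_of_lt (by linarith [le_max_right (f i) (f j)])⟩
    · exact (h i (by simpa using hi') j (by simpa using hj')).exists_between
    · rw [Set.inter_comm]
      exact (h j (by simpa using hj') i (by simpa using hi')).exists_between
    · exact ⟨min (f i) (f j) - 1, ltOrLe_of_lt (by linarith [min_le_left (f i) (f j)]),
        ltOrLe_of_lt (by linarith [min_le_right (f i) (f j)])⟩
  obtain ⟨t, ht⟩ := Convex.helly_theorem_of_finrank_eq_one (finrank_self K) h_convex h_inter
  simp only [Set.mem_iInter] at ht
  exact ⟨t, fun i hi => ht (.inl i) (by simpa using hi),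
    fun j hj => ht (.inr j) (by simpa using hj)⟩

end LtOrLe

structure LinIneq (q : ℕ) where
  coeff : Fin q → ℚ
  rhs : ℚ
  strict : Bool

namespace LinIneq

variable {K : Type*} [Field K] {q : ℕ}

def lhs (c : LinIneq q) (x : Fin q → K) : K := ∑ j, (c.coeff j : K) * x j

def tail (c : LinIneq (q + 1)) : LinIneq q := ⟨Fin.tail c.coeff, c.rhs, c.strict⟩

def bound (c : LinIneq (q + 1)) (x : Fin q → K) : K := (c.rhs - c.tail.lhs x) / c.coeff 0

def combine (l u : LinIneq (q + 1)) : LinIneq q :=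
  ⟨fun j => u.coeff j.succ / u.coeff 0 - l.coeff j.succ / l.coeff 0,
    u.rhs / u.coeff 0 - l.rhs / l.coeff 0, l.strict || u.strict⟩

theorem lhs_cons (c : LinIneq (q + 1)) (t : K) (x : Fin q → K) :
    c.lhs (Fin.cons t x : Fin (q + 1) → K) = c.coeff 0 * t + c.tail.lhs x := by
  simp [lhs, tail, Fin.sum_univ_succ, Fin.tail]

variable [LinearOrder K]

def Holds (c : LinIneq q) (x : Fin q → K) : Prop := LtOrLe c.strict (c.lhs x) c.rhs

theorem holds_cons_iff_of_coeff_eq_zero {c : LinIneq (q + 1)} (hc : c.coeff 0 = 0) (t : K)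
    (x : Fin q → K) : c.Holds (Fin.cons t x : Fin (q + 1) → K) ↔ c.tail.Holds x := by
  simp [Holds, lhs_cons, hc, tail]

variable (K) in
def Satisfiable (L : List (LinIneq q)) : Prop := ∃ x : Fin q → K, ∀ c ∈ L, c.Holds x

variable (K) in
theorem satisfiable_ofFn_append_ofFn_iff {p r : ℕ} (A : Matrix (Fin p) (Fin q) ℚ)
    (C : Matrix (Fin r) (Fin q) ℚ) (b : Fin p → ℚ) (e : Fin r → ℚ) :
    Satisfiable K (List.ofFn (fun i => ⟨A i, b i, false⟩) ++ List.ofFn fun k => ⟨C k, e k, true⟩) ↔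
      ∃ x : Fin q → K, (∀ i, ∑ j, (A i j : K) * x j ≤ b i) ∧ ∀ k, ∑ j, (C k j : K) * x j < e k := by
  simp only [Satisfiable, List.forall_mem_append, List.forall_mem_ofFn_iff]
  rfl

variable [IsStrictOrderedRing K]

theorem bound_eq (c : LinIneq (q + 1)) (x : Fin q → K) :
    c.bound x = c.rhs / c.coeff 0 - ∑ j, ((c.coeff j.succ / c.coeff 0 : ℚ) : K) * x j := by
  simp only [bound, lhs, tail, Fin.tail, sub_div, Finset.sum_div, Rat.cast_div, div_mul_eq_mul_div]

theorem holds_combine_iff (l u : LinIneq (q + 1)) (x : Fin q → K) :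
    (combine l u).Holds x ↔ LtOrLe (l.strict || u.strict) (l.bound x) (u.bound x) := by
  have hlhs : (combine l u).lhs x = (combine l u).rhs - u.bound x + l.bound x := by
    simp only [combine, lhs, bound_eq, Rat.cast_sub, sub_mul, Finset.sum_sub_distrib]
    push_cast
    ring
  rw [Holds, hlhs]
  exact ltOrLe_sub_add_iff

theorem holds_cons_iff_of_coeff_pos {c : LinIneq (q + 1)} (hc : 0 < c.coeff 0) (t : K)
    (x : Fin q → K) :
    c.Holds (Fin.cons t x : Fin (q + 1) → K) ↔ LtOrLe c.strict t (c.bound x) := by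
  rw [Holds, lhs_cons, ltOrLe_mul_add_iff_of_pos (Rat.cast_pos.mpr hc), bound]

theorem holds_cons_iff_of_coeff_neg {c : LinIneq (q + 1)} (hc : c.coeff 0 < 0) (t : K)
    (x : Fin q → K) :
    c.Holds (Fin.cons t x : Fin (q + 1) → K) ↔ LtOrLe c.strict (c.bound x) t := by
  rw [Holds, lhs_cons, ltOrLe_mul_add_iff_of_neg (Rat.cast_lt_zero.mpr hc), bound]

def eliminate (L : List (LinIneq (q + 1))) : List (LinIneq q) :=
  (L.filter (·.coeff 0 = 0)).map tail ++
    (L.filter (·.coeff 0 < 0) ×ˢ L.filter (0 < ·.coeff 0)).map fun p => combine p.1 p.2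

theorem forall_holds_eliminate_iff (L : List (LinIneq (q + 1))) (x : Fin q → K) :
    (∀ c ∈ eliminate L, c.Holds x) ↔ ∃ t, ∀ c ∈ L, c.Holds (Fin.cons t x : Fin (q + 1) → K) := by
  simp only [eliminate, List.forall_mem_append, List.forall_mem_map, List.mem_product,
    List.mem_filter, decide_eq_true_iff, Prod.forall, and_imp]
  constructor
  · rintro ⟨h_zero, h_pair⟩
    classical
    obtain ⟨t, h_lo, h_hi⟩ := exists_ltOrLe_between (f := (·.bound x)) (strict := strict)
      (lo := (L.filter (·.coeff 0 < 0)).toFinset) (hi := (L.filter (0 < ·.coeff 0)).toFinset)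
      (by
        simp only [List.mem_toFinset, List.mem_filter, decide_eq_true_iff, and_imp]
        exact fun l hl hl0 u hu hu0 => (holds_combine_iff l u x).mp (h_pair l u hl hl0 hu hu0))
    simp only [List.mem_toFinset, List.mem_filter, decide_eq_true_iff, and_imp] at h_lo h_hi
    refine ⟨t, fun c hc => ?_⟩
    rcases lt_trichotomy (c.coeff 0) 0 with hc0 | hc0 | hc0
    · exact (holds_cons_iff_of_coeff_neg hc0 t x).mpr (h_lo c hc hc0)
    · exact (holds_cons_iff_of_coeff_eq_zero hc0 t x).mpr (h_zero c hc hc0)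
    · exact (holds_cons_iff_of_coeff_pos hc0 t x).mpr (h_hi c hc hc0)
  · rintro ⟨t, ht⟩
    refine ⟨fun c hc hc0 => (holds_cons_iff_of_coeff_eq_zero hc0 t x).mp (ht c hc),
      fun l u hl hl0 hu hu0 => (holds_combine_iff l u x).mpr ?_⟩
    exact ((holds_cons_iff_of_coeff_neg hl0 t x).mp (ht l hl)).trans
      ((holds_cons_iff_of_coeff_pos hu0 t x).mp (ht u hu))

theorem satisfiable_eliminate_iff (L : List (LinIneq (q + 1))) :
    Satisfiable K (eliminate L) ↔ Satisfiable K L := by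
  constructor
  · rintro ⟨x, hx⟩
    obtain ⟨t, ht⟩ := (forall_holds_eliminate_iff L x).mp hx
    exact ⟨Fin.cons t x, ht⟩
  · rintro ⟨x, hx⟩
    refine ⟨Fin.tail x, (forall_holds_eliminate_iff L (Fin.tail x)).mpr ⟨x 0, ?_⟩⟩
    rwa [Fin.cons_self_tail]

def eliminateAll : {q : ℕ} → List (LinIneq q) → List (LinIneq 0)
  | 0, L => L
  | _ + 1, L => eliminateAll (eliminate L)

theorem satisfiable_eliminateAll_iff : ∀ {q : ℕ} (L : List (LinIneq q)),
    Satisfiable K (eliminateAll L) ↔ Satisfiable K L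
  | 0, _ => Iff.rfl
  | _ + 1, L => (satisfiable_eliminateAll_iff (eliminate L)).trans (satisfiable_eliminate_iff L)

theorem satisfiable_zero_iff (L : List (LinIneq 0)) :
    Satisfiable K L ↔ ∀ c ∈ L, LtOrLe c.strict 0 c.rhs := by
  simp [Satisfiable, Holds, lhs, ← ltOrLe_ratCast_iff (K := K)]

theorem satisfiable_iff_satisfiable (K' : Type*) [Field K'] [LinearOrder K']
    [IsStrictOrderedRing K'] (L : List (LinIneq q)) : Satisfiable K L ↔ Satisfiable K' L := by
  rw [← satisfiable_eliminateAll_iff (K := K), ← satisfiable_eliminateAll_iff (K := K'),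
    satisfiable_zero_iff, satisfiable_zero_iff]

end LinIneq

theorem rational_solution_iff {p q r : ℕ}
    (A : Matrix (Fin p) (Fin q) ℚ) (C : Matrix (Fin r) (Fin q) ℚ)
    (b : Fin p → ℚ) (e : Fin r → ℚ) :
    (∃ x : Fin q → ℝ,
        (∀ i, ∑ j, (A i j : ℝ) * x j ≤ (b i : ℝ)) ∧
        (∀ k, ∑ j, (C k j : ℝ) * x j < (e k : ℝ)))
      ↔
    (∃ x : Fin q → ℚ,
        (∀ i, ∑ j, A i j * x j ≤ b i) ∧
        (∀ k, ∑ j, C k j * x j < e k)) := by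
  rw [← LinIneq.satisfiable_ofFn_append_ofFn_iff ℝ, LinIneq.satisfiable_iff_satisfiable ℚ,
    LinIneq.satisfiable_ofFn_append_ofFn_iff ℚ]
  simp only [Rat.cast_id]
end

section
/- A linear program with rational data that has an optimal solution has a rational optimal solution: if there exists x* : Fin q → ℝ with (∀ i, ∑ j, (A i j : ℝ) * x* j ≤ (b i : ℝ)) and ∑ j, (c j : ℝ) * x* j ≥ ∑ j, (c j : ℝ) * x j for every x : Fin q → ℝ satisfying ∀ i, ∑ j, (A i j : ℝ) * x j ≤ (b i : ℝ), then there exists such an optimal x* all of whose coordinates are rational. -/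
lemma row_lin {q : ℕ} (a x0 zr : Fin q → ℝ) (t : ℝ) :
    ∑ j, a j * (x0 j + t * (zr j - x0 j))
      = (∑ j, a j * x0 j) + t * ((∑ j, a j * zr j) - ∑ j, a j * x0 j) := by
  have e : ∀ j, a j * (x0 j + t * (zr j - x0 j))
      = a j * x0 j + t * (a j * zr j) - t * (a j * x0 j) := fun j => by ring
  simp only [e, Finset.sum_sub_distrib, Finset.sum_add_distrib, ← Finset.mul_sum]
  ring


lemma rat_solvable {m n : Type*} [Fintype m] [Fintype n] [DecidableEq m] [DecidableEq n]
    (M : Matrix m n ℚ) (d : m → ℚ) (x : n → ℝ)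
    (hx : ∀ i, ∑ j, (M i j : ℝ) * x j = (d i : ℝ)) :
    ∃ z : n → ℚ, ∀ i, ∑ j, M i j * z j = d i := by
  by_contra hcon
  push_neg at hcon
  have hd : d ∉ LinearMap.range M.mulVecLin := by
    rintro ⟨z, hz⟩
    obtain ⟨i, hi⟩ := hcon z
    apply hi
    rw [← congrFun hz i]
    simp [Matrix.mulVecLin_apply, Matrix.mulVec, dotProduct]
  set W := LinearMap.range M.mulVecLin with hW
  have hq : W.mkQ d ≠ 0 := by
    simpa [Submodule.Quotient.mk_eq_zero] using hd
  obtain ⟨φ, hφ⟩ : ∃ φ : Module.Dual ℚ ((m → ℚ) ⧸ W), φ (W.mkQ d) ≠ 0 := by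
    by_contra hc
    push_neg at hc
    exact hq ((Module.forall_dual_apply_eq_zero_iff ℚ _).mp hc)
  set f : (m → ℚ) →ₗ[ℚ] ℚ := φ.comp W.mkQ with hf
  have hfW : ∀ w ∈ W, f w = 0 := by
    intro w hw
    simp [hf, (Submodule.Quotient.mk_eq_zero W).mpr hw]
  set y : m → ℚ := fun i => f (Pi.single i 1) with hy
  have hrep : ∀ v : m → ℚ, f v = ∑ i, v i * y i := by
    intro v
    conv_lhs => rw [← Finset.univ_sum_single v]
    rw [map_sum]
    congr 1
    ext i
    have h1 : Pi.single i (v i) = v i • (Pi.single i (1:ℚ) : m → ℚ) := by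
      ext k
      by_cases hk : k = i <;> simp [Pi.single_apply, hk]
    rw [h1, map_smul, smul_eq_mul]
  have hcol : ∀ j, ∑ i, M i j * y i = 0 := by
    intro j
    have hmem : (fun i => M i j) ∈ W := by
      refine ⟨Pi.single j 1, ?_⟩
      ext i
      simp [Matrix.mulVecLin_apply, Matrix.mulVec, dotProduct, Pi.single_apply]
    have := hfW _ hmem
    rwa [hrep] at this
  have hfd : f d ≠ 0 := hφ
  rw [hrep] at hfd
  have : ((∑ i, d i * y i : ℚ) : ℝ) = 0 := by
    push_cast
    calc ∑ i, (d i : ℝ) * (y i : ℝ)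
        = ∑ i, ∑ j, (M i j : ℝ) * x j * (y i : ℝ) := by
          refine Finset.sum_congr rfl fun i _ => ?_
          rw [← (hx i), Finset.sum_mul]
      _ = ∑ j, ∑ i, (M i j : ℝ) * x j * (y i : ℝ) := Finset.sum_comm
      _ = ∑ j, (∑ i, (M i j : ℝ) * (y i : ℝ)) * x j := by
          refine Finset.sum_congr rfl fun j _ => ?_
          rw [Finset.sum_mul]
          exact Finset.sum_congr rfl fun i _ => by ring
      _ = 0 := by
          refine Finset.sum_eq_zero fun j _ => ?_
          have h2 : ((∑ i, M i j * y i : ℚ) : ℝ) = 0 := by rw [hcol j]; norm_cast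
          push_cast at h2
          rw [h2, zero_mul]
  exact hfd (by exact_mod_cast this)

open Finset in
lemma key {p q : ℕ}
    (A : Matrix (Fin p) (Fin q) ℚ) (b : Fin p → ℚ) (c : Fin q → ℚ)
    (x0 : Fin q → ℝ)
    (hx0f : ∀ i, ∑ j, (A i j : ℝ) * x0 j ≤ (b i : ℝ))
    (hx0o : ∀ x : Fin q → ℝ, (∀ i, ∑ j, (A i j : ℝ) * x j ≤ (b i : ℝ)) →
          ∑ j, (c j : ℝ) * x j ≤ ∑ j, (c j : ℝ) * x0 j)
    (hmax : ∀ x : Fin q → ℝ, (∀ i, ∑ j, (A i j : ℝ) * x j ≤ (b i : ℝ)) →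
      (∀ y : Fin q → ℝ, (∀ i, ∑ j, (A i j : ℝ) * y j ≤ (b i : ℝ)) →
          ∑ j, (c j : ℝ) * y j ≤ ∑ j, (c j : ℝ) * x j) →
      (univ.filter (fun i => ∑ j, (A i j : ℝ) * x j = (b i : ℝ))).card ≤
      (univ.filter (fun i => ∑ j, (A i j : ℝ) * x0 j = (b i : ℝ))).card) :
    ∃ xstar : Fin q → ℚ,
        (∀ i, ∑ j, (A i j : ℝ) * (xstar j : ℝ) ≤ (b i : ℝ)) ∧
        ∀ x : Fin q → ℝ, (∀ i, ∑ j, (A i j : ℝ) * x j ≤ (b i : ℝ)) →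
          ∑ j, (c j : ℝ) * x j ≤ ∑ j, (c j : ℝ) * (xstar j : ℝ) := by
  classical
  set I : Finset (Fin p) :=
    univ.filter (fun i => ∑ j, (A i j : ℝ) * x0 j = (b i : ℝ)) with hI
  have htight : ∀ i ∈ I, ∑ j, (A i j : ℝ) * x0 j = (b i : ℝ) := by
    intro i hi; exact (Finset.mem_filter.mp hi).2
  have hslack : ∀ i ∉ I, ∑ j, (A i j : ℝ) * x0 j < (b i : ℝ) := by
    intro i hi
    refine lt_of_le_of_ne (hx0f i) fun he => hi ?_
    exact Finset.mem_filter.mpr ⟨Finset.mem_univ _, he⟩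
  -- rational solution of the tight subsystem
  obtain ⟨z, hz⟩ := rat_solvable (m := {i // i ∈ I}) (n := Fin q)
      (fun i j => A i.1 j) (fun i => b i.1) x0 (fun i => htight i.1 i.2)
  have hzt : ∀ i ∈ I, ∑ j, (A i j : ℝ) * (z j : ℝ) = (b i : ℝ) := by
    intro i hi
    have := hz ⟨i, hi⟩
    have h2 : ((∑ j, A i j * z j : ℚ) : ℝ) = ((b i : ℚ) : ℝ) := by rw [this]
    push_cast at h2
    exact h2
  set zr : Fin q → ℝ := fun j => (z j : ℝ) with hzr
  -- small-t feasibility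
  have heps : ∃ ε : ℝ, 0 < ε ∧ ∀ t : ℝ, |t| ≤ ε →
      ∀ i, ∑ j, (A i j : ℝ) * (x0 j + t * (zr j - x0 j)) ≤ (b i : ℝ) := by
    by_cases hF : (univ.filter (fun i => i ∉ I)).Nonempty
    · set F := univ.filter (fun i : Fin p => i ∉ I) with hFdef
      refine ⟨min 1 (F.inf' hF fun i =>
          ((b i : ℝ) - ∑ j, (A i j : ℝ) * x0 j) /
            (|(∑ j, (A i j : ℝ) * zr j) - ∑ j, (A i j : ℝ) * x0 j| + 1)), ?_, ?_⟩
      · refine lt_min one_pos ?_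
        rw [Finset.lt_inf'_iff]
        intro i hi
        have hi' : i ∉ I := (Finset.mem_filter.mp hi).2
        have hlt := hslack i hi'
        exact div_pos (sub_pos.mpr hlt) (by positivity)
      · intro t ht i
        rw [row_lin]
        by_cases hi : i ∈ I
        · rw [htight i hi, hzt i hi]
          simp
        · have hiF : i ∈ F := Finset.mem_filter.mpr ⟨Finset.mem_univ _, hi⟩
          set si := ∑ j, (A i j : ℝ) * x0 j with hsi
          set ui := ∑ j, (A i j : ℝ) * zr j with hui
          have hεle : min 1 (F.inf' hF fun i =>
              ((b i : ℝ) - ∑ j, (A i j : ℝ) * x0 j) /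
                (|(∑ j, (A i j : ℝ) * zr j) - ∑ j, (A i j : ℝ) * x0 j| + 1)) ≤
              ((b i : ℝ) - si) / (|ui - si| + 1) :=
            (min_le_right _ _).trans (Finset.inf'_le _ hiF)
          have h1 : |t| ≤ ((b i : ℝ) - si) / (|ui - si| + 1) := le_trans ht hεle
          have h2 : |t| * (|ui - si| + 1) ≤ (b i : ℝ) - si := by
            rw [← le_div_iff₀ (by positivity)]
            exact h1
          have h3 : t * (ui - si) ≤ |t| * |ui - si| := by
            calc t * (ui - si) ≤ |t * (ui - si)| := le_abs_self _
              _ = |t| * |ui - si| := abs_mul _ _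
          have h4 : |t| * |ui - si| ≤ |t| * (|ui - si| + 1) := by
            have := abs_nonneg t
            nlinarith
          linarith
    · refine ⟨1, one_pos, ?_⟩
      intro t ht i
      have hi : i ∈ I := by
        by_contra hni
        exact hF ⟨i, Finset.mem_filter.mpr ⟨Finset.mem_univ _, hni⟩⟩
      rw [row_lin, htight i hi, hzt i hi]
      simp
  -- objective equality
  have hobjz : ∑ j, (c j : ℝ) * zr j = ∑ j, (c j : ℝ) * x0 j := by
    obtain ⟨ε, hε, hfe⟩ := heps
    have h1 := hx0o _ (hfe ε (by rw [abs_of_pos hε]))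
    have h2 := hx0o _ (hfe (-ε) (by rw [abs_neg, abs_of_pos hε]))
    rw [row_lin] at h1 h2
    nlinarith [h1, h2]
  -- feasibility of zr
  have hzfeas : ∀ i, ∑ j, (A i j : ℝ) * zr j ≤ (b i : ℝ) := by
    by_contra hbad
    push_neg at hbad
    obtain ⟨i0, hi0⟩ := hbad
    have hi0I : i0 ∉ I := fun h => absurd hi0 (by rw [hzt i0 h]; exact lt_irrefl _)
    set G := univ.filter (fun i : Fin p =>
      i ∉ I ∧ (∑ j, (A i j : ℝ) * x0 j) < ∑ j, (A i j : ℝ) * zr j) with hG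
    have hi0G : i0 ∈ G := Finset.mem_filter.mpr
      ⟨Finset.mem_univ _, hi0I, lt_trans (hslack i0 hi0I) hi0⟩
    obtain ⟨i1, hi1G, hi1min⟩ := Finset.exists_min_image G (fun i =>
      ((b i : ℝ) - ∑ j, (A i j : ℝ) * x0 j) /
        ((∑ j, (A i j : ℝ) * zr j) - ∑ j, (A i j : ℝ) * x0 j)) ⟨i0, hi0G⟩
    obtain ⟨-, hi1I, hi1lt⟩ := Finset.mem_filter.mp hi1G
    set ts := ((b i1 : ℝ) - ∑ j, (A i1 j : ℝ) * x0 j) /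
        ((∑ j, (A i1 j : ℝ) * zr j) - ∑ j, (A i1 j : ℝ) * x0 j) with hts
    have hts_pos : 0 < ts := div_pos (sub_pos.mpr (hslack i1 hi1I)) (sub_pos.mpr hi1lt)
    set xt : Fin q → ℝ := fun j => x0 j + ts * (zr j - x0 j) with hxt
    have hxtf : ∀ i, ∑ j, (A i j : ℝ) * xt j ≤ (b i : ℝ) := by
      intro i
      rw [hxt]
      rw [row_lin]
      by_cases hi : i ∈ I
      · rw [htight i hi, hzt i hi]; simp
      · by_cases hu : (∑ j, (A i j : ℝ) * x0 j) < ∑ j, (A i j : ℝ) * zr j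
        · have hiG : i ∈ G := Finset.mem_filter.mpr ⟨Finset.mem_univ _, hi, hu⟩
          have hmin := hi1min i hiG
          have h5 : ts * ((∑ j, (A i j : ℝ) * zr j) - ∑ j, (A i j : ℝ) * x0 j)
              ≤ (b i : ℝ) - ∑ j, (A i j : ℝ) * x0 j := by
            rw [← le_div_iff₀ (sub_pos.mpr hu)]
            exact hmin
          linarith
        · push_neg at hu
          have := hslack i hi
          nlinarith [hts_pos, sub_nonpos.mpr hu]
    have hxto : ∀ y : Fin q → ℝ, (∀ i, ∑ j, (A i j : ℝ) * y j ≤ (b i : ℝ)) →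
        ∑ j, (c j : ℝ) * y j ≤ ∑ j, (c j : ℝ) * xt j := by
      intro y hy
      have h6 : ∑ j, (c j : ℝ) * xt j = ∑ j, (c j : ℝ) * x0 j := by
        rw [hxt, row_lin, hobjz]; ring
      rw [h6]
      exact hx0o y hy
    -- tight set of xt strictly larger
    have hsub : insert i1 I ⊆ univ.filter (fun i => ∑ j, (A i j : ℝ) * xt j = (b i : ℝ)) := by
      intro i hi
      rcases Finset.mem_insert.mp hi with h | h
      · subst h
        refine Finset.mem_filter.mpr ⟨Finset.mem_univ _, ?_⟩
        rw [hxt, row_lin, hts]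
        rw [div_mul_cancel₀ _ (ne_of_gt (sub_pos.mpr hi1lt))]
        ring
      · refine Finset.mem_filter.mpr ⟨Finset.mem_univ _, ?_⟩
        rw [hxt, row_lin, htight i h, hzt i h]
        ring
    have hcard := Finset.card_le_card hsub
    rw [Finset.card_insert_of_notMem hi1I] at hcard
    have := hmax xt hxtf hxto
    omega
  refine ⟨z, hzfeas, ?_⟩
  intro x hx
  calc ∑ j, (c j : ℝ) * x j ≤ ∑ j, (c j : ℝ) * x0 j := hx0o x hx
    _ = ∑ j, (c j : ℝ) * zr j := hobjz.symm

theorem rational_optimal_solution {p q : ℕ}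
    (A : Matrix (Fin p) (Fin q) ℚ) (b : Fin p → ℚ) (c : Fin q → ℚ)
    (h : ∃ xstar : Fin q → ℝ,
        (∀ i, ∑ j, (A i j : ℝ) * xstar j ≤ (b i : ℝ)) ∧
        ∀ x : Fin q → ℝ, (∀ i, ∑ j, (A i j : ℝ) * x j ≤ (b i : ℝ)) →
          ∑ j, (c j : ℝ) * x j ≤ ∑ j, (c j : ℝ) * xstar j) :
    ∃ xstar : Fin q → ℚ,
        (∀ i, ∑ j, (A i j : ℝ) * (xstar j : ℝ) ≤ (b i : ℝ)) ∧
        ∀ x : Fin q → ℝ, (∀ i, ∑ j, (A i j : ℝ) * x j ≤ (b i : ℝ)) →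
          ∑ j, (c j : ℝ) * x j ≤ ∑ j, (c j : ℝ) * (xstar j : ℝ) := by
  classical
  obtain ⟨xs, hxsf, hxso⟩ := h
  set N : Set ℕ := {k | ∃ x : Fin q → ℝ,
      ((∀ i, ∑ j, (A i j : ℝ) * x j ≤ (b i : ℝ)) ∧
        ∀ y : Fin q → ℝ, (∀ i, ∑ j, (A i j : ℝ) * y j ≤ (b i : ℝ)) →
          ∑ j, (c j : ℝ) * y j ≤ ∑ j, (c j : ℝ) * x j) ∧
      (Finset.univ.filter (fun i => ∑ j, (A i j : ℝ) * x j = (b i : ℝ))).card = k} with hN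
  have hNne : N.Nonempty := ⟨_, xs, ⟨hxsf, hxso⟩, rfl⟩
  have hNbdd : BddAbove N := by
    refine ⟨p, ?_⟩
    rintro k ⟨x, -, rfl⟩
    simpa using (Finset.card_filter_le Finset.univ _).trans (by simp)
  obtain ⟨x0, ⟨hx0f, hx0o⟩, hx0card⟩ := Nat.sSup_mem hNne hNbdd
  refine key A b c x0 hx0f hx0o ?_
  intro x hxf hxo
  rw [hx0card]
  exact le_csSup hNbdd ⟨x, ⟨hxf, hxo⟩, rfl⟩
end

section
/- A feasible linear program whose objective is bounded above attains its supremum: if the polyhedron {x : Fin q → ℝ | A.mulVec x ≤ b} is nonempty and the set {c ⬝ᵥ x | A.mulVec x ≤ b} is bounded above, then there exists x* with A.mulVec x* ≤ b and c ⬝ᵥ x* = sSup {c ⬝ᵥ x | A.mulVec x ≤ b}. -/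
/-!
Induction on the number of inequality constraints, over polyhedra cut out of an arbitrary affine
subspace `V` of a real vector space. With no constraints, a linear functional bounded above on `V`
is constant on `V`. When a constraint `g x ≤ γ` is added to a polyhedron `P`, either every point of
the new polyhedron is dominated (in `f`) by a point of `P` violating the constraint, and then, by
convexity, by a point of the facet `P ∩ {g = γ}`, which is a polyhedron in the smaller affine
subspace `V ∩ {g = γ}`; or `f` is bounded on `P` and a maximizer on `P` already satisfies the
constraint.
-/

open Matrix

variable {E ι : Type*} [AddCommGroup E] [Module ℝ E]

theorem AffineSubspace.isMaxOn_of_bddAbove_image {V : AffineSubspace ℝ E} {f : E →ₗ[ℝ] ℝ}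
    (hbdd : BddAbove (f '' V)) {x : E} (hx : x ∈ V) : IsMaxOn f V x := by
  rw [isMaxOn_iff]
  intro y hy
  by_contra! hlt
  obtain ⟨M, hM⟩ := hbdd
  set t := (M - f x) / (f y - f x) + 1
  have hline : f (AffineMap.lineMap x y t) = f x + t * (f y - f x) := by
    rw [AffineMap.lineMap_apply_module, map_add, map_smul, map_smul, smul_eq_mul, smul_eq_mul]
    ring
  have hle := hM ⟨_, AffineMap.lineMap_mem t hx hy, rfl⟩
  have hdiff : 0 < f y - f x := sub_pos.2 hlt
  have : t * (f y - f x) = M - f x + (f y - f x) := by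
    simp only [t]; field_simp
  linarith

theorem LinearMap.exists_mem_segment_apply_eq (g : E →ₗ[ℝ] ℝ) {x y : E} {γ : ℝ}
    (hx : g x ≤ γ) (hy : γ ≤ g y) : ∃ z ∈ segment ℝ x y, g z = γ := by
  have hγ : γ ∈ g.toAffineMap '' segment ℝ x y := by
    rw [image_segment, LinearMap.coe_toAffineMap, segment_eq_Icc (hx.trans hy)]
    exact ⟨hx, hy⟩
  simpa using hγ

theorem LinearMap.apply_le_of_mem_segment (f : E →ₗ[ℝ] ℝ) {x y z : E} (hxy : f x ≤ f y)
    (hz : z ∈ segment ℝ x y) : f x ≤ f z := by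
  have hfz := Set.mem_image_of_mem f.toAffineMap hz
  rw [image_segment, LinearMap.coe_toAffineMap, segment_eq_Icc hxy] at hfz
  exact hfz.1

def polyhedron (V : AffineSubspace ℝ E) (g : ι → E →ₗ[ℝ] ℝ) (β : ι → ℝ) (s : Finset ι) :
    Set E :=
  {x | x ∈ V ∧ ∀ i ∈ s, g i x ≤ β i}

section polyhedron

variable {V : AffineSubspace ℝ E} {g : ι → E →ₗ[ℝ] ℝ} {β : ι → ℝ} {s : Finset ι}

theorem convex_polyhedron : Convex ℝ (polyhedron V g β s) := by
  rintro x ⟨hxV, hx⟩ y ⟨hyV, hy⟩ a b ha hb hab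
  refine ⟨V.convex hxV hyV ha hb hab, fun i hi => ?_⟩
  rw [map_add, map_smul, map_smul, smul_eq_mul, smul_eq_mul]
  calc a * g i x + b * g i y ≤ a * β i + b * β i :=
        add_le_add (mul_le_mul_of_nonneg_left (hx i hi) ha)
          (mul_le_mul_of_nonneg_left (hy i hi) hb)
    _ = β i := by rw [← add_mul, hab, one_mul]

@[simp]
theorem polyhedron_empty : polyhedron V g β ∅ = V := by
  simp [polyhedron]

theorem polyhedron_insert [DecidableEq ι] (a : ι) :
    polyhedron V g β (insert a s) = polyhedron V g β s ∩ {x | g a x ≤ β a} := by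
  ext x
  simp only [polyhedron, Finset.forall_mem_insert, Set.mem_inter_iff, Set.mem_ofPred_eq]
  tauto

theorem polyhedron_inf_comap (a : ι) :
    polyhedron (V ⊓ (affineSpan ℝ {β a}).comap (g a).toAffineMap) g β s =
      polyhedron V g β s ∩ {x | g a x = β a} := by
  ext x
  simp only [polyhedron, AffineSubspace.mem_inf_iff, AffineSubspace.mem_comap,
    AffineSubspace.mem_affineSpan_singleton, LinearMap.coe_toAffineMap, Set.mem_inter_iff,
    Set.mem_ofPred_eq]
  tauto

end polyhedron

theorem exists_isMaxOn_polyhedron (g : ι → E →ₗ[ℝ] ℝ) (β : ι → ℝ) (f : E →ₗ[ℝ] ℝ) (s : Finset ι)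
    (V : AffineSubspace ℝ E) (hne : (polyhedron V g β s).Nonempty)
    (hbdd : BddAbove (f '' polyhedron V g β s)) :
    ∃ x ∈ polyhedron V g β s, IsMaxOn f (polyhedron V g β s) x := by
  classical
  induction s using Finset.induction_on generalizing V with
  | empty =>
    obtain ⟨x, hx⟩ := hne
    rw [polyhedron_empty] at hx hbdd ⊢
    exact ⟨x, hx, V.isMaxOn_of_bddAbove_image hbdd hx⟩
  | insert a s _ ih =>
    rw [polyhedron_insert] at hne hbdd ⊢
    set P := polyhedron V g β s
    by_cases hfar : ∀ y ∈ P ∩ {x | g a x ≤ β a}, ∃ x ∈ P, β a < g a x ∧ f y ≤ f x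
    · have hfacet : ∀ y ∈ P ∩ {x | g a x ≤ β a},
          ∃ z ∈ P ∩ {x | g a x = β a}, f y ≤ f z := by
        rintro y ⟨hyP, hya⟩
        obtain ⟨x, hxP, hxa, hfyx⟩ := hfar y ⟨hyP, hya⟩
        obtain ⟨z, hz, hza⟩ := (g a).exists_mem_segment_apply_eq hya hxa.le
        exact ⟨z, ⟨convex_polyhedron.segment_subset hyP hxP hz, hza⟩,
          f.apply_le_of_mem_segment hfyx hz⟩
      have hsub : P ∩ {x | g a x = β a} ⊆ P ∩ {x | g a x ≤ β a} :=
        Set.inter_subset_inter_right _ fun x hx => le_of_eq hx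
      obtain ⟨y, hy⟩ := hne
      obtain ⟨z, hz, -⟩ := hfacet y hy
      obtain ⟨w, hw, hwmax⟩ := ih (V ⊓ (affineSpan ℝ {β a}).comap (g a).toAffineMap)
        (by rw [polyhedron_inf_comap]; exact ⟨z, hz⟩)
        (by rw [polyhedron_inf_comap]; exact hbdd.mono (Set.image_mono hsub))
      rw [polyhedron_inf_comap] at hw hwmax
      refine ⟨w, hsub hw, fun y hy => ?_⟩
      obtain ⟨z, hz, hyz⟩ := hfacet y hy
      exact hyz.trans (hwmax hz)
    · push Not at hfar
      obtain ⟨y, hy, hfar⟩ := hfar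
      obtain ⟨M, hM⟩ := hbdd
      have hbddP : BddAbove (f '' P) := by
        refine ⟨M, Set.forall_mem_image.2 fun x hx => ?_⟩
        by_cases hxa : g a x ≤ β a
        · exact hM (Set.mem_image_of_mem f ⟨hx, hxa⟩)
        · exact (hfar x hx (not_le.1 hxa)).le.trans (hM (Set.mem_image_of_mem f hy))
      obtain ⟨x, hxP, hxmax⟩ := ih V ⟨y, hy.1⟩ hbddP
      have hxa : g a x ≤ β a := not_lt.1 fun hxa => (hfar x hxP hxa).not_ge (hxmax hy.1)
      exact ⟨x, ⟨hxP, hxa⟩, hxmax.on_subset Set.inter_subset_left⟩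

theorem lp_sup_attained {p q : ℕ}
    (A : Matrix (Fin p) (Fin q) ℝ) (b : Fin p → ℝ) (c : Fin q → ℝ)
    (hne : Set.Nonempty {x : Fin q → ℝ | A.mulVec x ≤ b})
    (hbdd : BddAbove {r : ℝ | ∃ x, A.mulVec x ≤ b ∧ r = c ⬝ᵥ x}) :
    ∃ xstar : Fin q → ℝ, A.mulVec xstar ≤ b ∧
      c ⬝ᵥ xstar = sSup {r : ℝ | ∃ x, A.mulVec x ≤ b ∧ r = c ⬝ᵥ x} := by
  have hP : polyhedron ⊤ (fun i => dotProductBilin ℝ ℝ (A i)) b Finset.univ =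
      {x | A.mulVec x ≤ b} := by
    ext x
    simp [polyhedron, Pi.le_def, Matrix.mulVec]
  have hvalues : {r : ℝ | ∃ x, A.mulVec x ≤ b ∧ r = c ⬝ᵥ x} =
      dotProductBilin ℝ ℝ c '' {x | A.mulVec x ≤ b} := by
    ext r
    simp [eq_comm]
  rw [hvalues, ← hP] at hbdd ⊢
  rw [← hP] at hne
  obtain ⟨x, hx, hxmax⟩ := exists_isMaxOn_polyhedron _ _ _ _ _ hne hbdd
  refine ⟨x, by rwa [hP] at hx, ?_⟩
  exact (IsGreatest.csSup_eq
    ⟨Set.mem_image_of_mem _ hx, Set.forall_mem_image.2 fun y hy => hxmax hy⟩).symm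
end

section
/- Detecting improvable bounds via strategies: for every statement s : Stmt (n + n) (interpreted on pairs (x, x') of input and output values), every d : Fin m → EReal, every row index j : Fin m, and every c : EReal, one has c < (absSem s d) j if and only if there exists t : Stmt (n + n) with Sel s t and c < (absSem t d) j. -/
open Matrix

noncomputable def gamma {m n : ℕ} (T : Matrix (Fin m) (Fin n) ℝ) (d : Fin m → EReal) :
    Set (Fin n → ℝ) :=
  {x | ∀ i, ((T.mulVec x) i : EReal) ≤ d i}

noncomputable def alpha {m n : ℕ} (T : Matrix (Fin m) (Fin n) ℝ) (X : Set (Fin n → ℝ)) :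
    Fin m → EReal :=
  sInf {d | X ⊆ gamma T d}

inductive Stmt (k : ℕ) where
  | atom (a : Fin k → ℝ) (β : ℝ) (strict : Bool)
  | and (s₁ s₂ : Stmt k)
  | or (s₁ s₂ : Stmt k)

def sat {k : ℕ} : Stmt k → (Fin k → ℝ) → Prop
  | .atom a β false, v => ∑ j, a j * v j ≤ β
  | .atom a β true, v => ∑ j, a j * v j < β
  | .and s₁ s₂, v => sat s₁ v ∧ sat s₂ v
  | .or s₁ s₂, v => sat s₁ v ∨ sat s₂ v

inductive Sel {k : ℕ} : Stmt k → Stmt k → Prop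
  | atom (a : Fin k → ℝ) (β : ℝ) (str : Bool) : Sel (.atom a β str) (.atom a β str)
  | and {s₁ s₂ t₁ t₂ : Stmt k} : Sel s₁ t₁ → Sel s₂ t₂ → Sel (.and s₁ s₂) (.and t₁ t₂)
  | orLeft {s₁ s₂ t : Stmt k} : Sel s₁ t → Sel (.or s₁ s₂) t
  | orRight {s₁ s₂ t : Stmt k} : Sel s₂ t → Sel (.or s₁ s₂) t

def collSem {n : ℕ} (s : Stmt (n + n)) (X : Set (Fin n → ℝ)) : Set (Fin n → ℝ) :=
  {x' | ∃ x ∈ X, sat s (Fin.append x x')}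

noncomputable def absSem {m n : ℕ} (T : Matrix (Fin m) (Fin n) ℝ)
    (s : Stmt (n + n)) (d : Fin m → EReal) : Fin m → EReal :=
  alpha T (collSem s (gamma T d))


lemma sat_iff_sel {k : ℕ} (s : Stmt k) (v : Fin k → ℝ) :
    sat s v ↔ ∃ t, Sel s t ∧ sat t v := by
  induction s with
  | atom a β str =>
    constructor
    · intro h; exact ⟨.atom a β str, Sel.atom a β str, h⟩
    · rintro ⟨t, ht, hs⟩; cases ht; exact hs
  | and s₁ s₂ ih₁ ih₂ =>
    constructor
    · rintro ⟨h₁, h₂⟩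
      obtain ⟨t₁, ht₁, hs₁⟩ := ih₁.mp h₁
      obtain ⟨t₂, ht₂, hs₂⟩ := ih₂.mp h₂
      exact ⟨.and t₁ t₂, Sel.and ht₁ ht₂, hs₁, hs₂⟩
    · rintro ⟨t, ht, hs⟩
      cases ht with
      | and h₁ h₂ =>
        obtain ⟨a, b⟩ := hs
        exact ⟨ih₁.mpr ⟨_, h₁, a⟩, ih₂.mpr ⟨_, h₂, b⟩⟩
  | or s₁ s₂ ih₁ ih₂ =>
    constructor
    · rintro (h | h)
      · obtain ⟨t, ht, hs⟩ := ih₁.mp h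
        exact ⟨t, Sel.orLeft ht, hs⟩
      · obtain ⟨t, ht, hs⟩ := ih₂.mp h
        exact ⟨t, Sel.orRight ht, hs⟩
    · rintro ⟨t, ht, hs⟩
      cases ht with
      | orLeft h => exact Or.inl (ih₁.mpr ⟨_, h, hs⟩)
      | orRight h => exact Or.inr (ih₂.mpr ⟨_, h, hs⟩)

lemma alpha_apply {m n : ℕ} (T : Matrix (Fin m) (Fin n) ℝ) (X : Set (Fin n → ℝ)) (j : Fin m) :
    alpha T X j = sSup ((fun x => ((T.mulVec x j : ℝ) : EReal)) '' X) := by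
  apply le_antisymm
  · have hmem : (fun i => sSup ((fun x => ((T.mulVec x i : ℝ) : EReal)) '' X)) ∈
        {d | X ⊆ gamma T d} := by
      intro x hx i
      exact le_sSup ⟨x, hx, rfl⟩
    exact (sInf_le hmem : sInf {d | X ⊆ gamma T d} ≤ _) j
  · apply sSup_le
    rintro e ⟨x, hx, rfl⟩
    show _ ≤ sInf {d | X ⊆ gamma T d} j
    rw [sInf_apply]
    apply le_iInf
    rintro ⟨f, hf⟩
    exact hf hx j

theorem improvable_iff_exists_strategy {m n : ℕ} (T : Matrix (Fin m) (Fin n) ℝ)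
    (s : Stmt (n + n)) (d : Fin m → EReal) (j : Fin m) (c : EReal) :
    c < absSem T s d j ↔ ∃ t : Stmt (n + n), Sel s t ∧ c < absSem T t d j := by
  simp only [absSem, alpha_apply, lt_sSup_iff, Set.mem_image]
  constructor
  · rintro ⟨e, ⟨x', ⟨x, hx, hsat⟩, rfl⟩, hc⟩
    obtain ⟨t, ht, hst⟩ := (sat_iff_sel s _).mp hsat
    exact ⟨t, ht, _, ⟨x', ⟨x, hx, hst⟩, rfl⟩, hc⟩
  · rintro ⟨t, ht, e, ⟨x', ⟨x, hx, hsat⟩, rfl⟩, hc⟩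
    exact ⟨_, ⟨x', ⟨x, hx, (sat_iff_sel s _).mpr ⟨t, ht, hsat⟩⟩, rfl⟩, hc⟩
end
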